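/- arXiv:2002.06762 — 7 statements merged into one kernel-verified Lean document; each statement's English description precedes it below -/
import Mathlib

section
/- For every finite tree T (a finite connected acyclic simple graph) with at least one edge and every vertex r of T, there exists an Euler tour of T rooted at r, i.e., a closed walk in T from r to r whose list of darts contains every dart of T exactly once (hence the walk has length 2(n-1) if T has n vertices). -/
/-!
Induction on the number of vertices. A tree with at least two vertices has a leaf `ℓ` with unique
neighbour `x`; deleting `ℓ` leaves a tree, whose Euler tour, rotated to start at `x` and preceded
by the detour `x → ℓ → x`, is an Euler tour of the whole tree. Any vertex lies on an Euler tour of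
a connected graph, so the tour can be rotated to start at `r`. Its length is the number of darts,
twice the number of edges.
-/

open SimpleGraph

/-- An Euler tour of a graph `G` rooted at `r` is a closed walk from `r` to `r`
whose list of darts contains every dart of `G` exactly once. -/
def SimpleGraph.Walk.IsEulerTour {V : Type*} {G : SimpleGraph V} {r : V}
    (w : G.Walk r r) : Prop :=
  letI : DecidableEq G.Dart := Classical.decEq _
  ∀ d : G.Dart, w.darts.count d = 1

open Finset

namespace SimpleGraph

theorem Hom.mapDart_injective {V W : Type*} {G : SimpleGraph V} {G' : SimpleGraph W}
    (f : G →g G') (hf : Function.Injective f) : Function.Injective f.mapDart := by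
  rintro ⟨⟨a, b⟩, _⟩ ⟨⟨c, d⟩, _⟩ h
  simp only [Hom.mapDart_apply, Dart.mk.injEq, Prod.map, Prod.mk.injEq] at h
  simp only [Dart.mk.injEq, Prod.mk.injEq]
  exact ⟨hf h.1, hf h.2⟩

namespace Walk

variable {V : Type*} {G : SimpleGraph V} {u v : V}

theorem isEulerTour_iff {w : G.Walk u u} :
    w.IsEulerTour ↔ w.darts.Nodup ∧ ∀ d : G.Dart, d ∈ w.darts := by
  let _ : DecidableEq G.Dart := Classical.decEq _
  refine ⟨fun h => ⟨List.nodup_iff_count_eq_one.mpr fun d _ => h d,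
    fun d => List.count_pos_iff.mp (by rw [h d]; exact Nat.one_pos)⟩,
    fun h d => List.count_eq_one_of_mem h.1 (h.2 d)⟩

theorem IsEulerTour.of_perm {w : G.Walk u u} {w' : G.Walk v v} (hw : w.IsEulerTour)
    (h : w'.darts.Perm w.darts) : w'.IsEulerTour := by
  rw [isEulerTour_iff] at hw ⊢
  exact ⟨h.nodup_iff.mpr hw.1, fun d => h.mem_iff.mpr (hw.2 d)⟩

theorem IsEulerTour.mem_support (hG : G.Preconnected) {w : G.Walk u u} (hw : w.IsEulerTour)
    (v : V) : v ∈ w.support := by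
  obtain rfl | hvu := eq_or_ne v u
  · exact w.start_mem_support
  obtain ⟨p⟩ := hG v u
  have hp : ¬ p.Nil := not_nil_of_ne hvu
  exact w.dart_fst_mem_support_of_mem_darts
    ((isEulerTour_iff.mp hw).2 ⟨(v, p.snd), p.adj_snd hp⟩)

theorem IsEulerTour.rotate [DecidableEq V] {w : G.Walk u u} (hw : w.IsEulerTour)
    (h : v ∈ w.support) : (w.rotate v h).IsEulerTour :=
  hw.of_perm (w.rotate_darts v h).perm

theorem IsEulerTour.length_eq [Fintype V] [DecidableRel G.Adj] {w : G.Walk u u}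
    (hw : w.IsEulerTour) : w.length = 2 * #G.edgeFinset := by
  classical
  obtain ⟨hnodup, hmem⟩ := isEulerTour_iff.mp hw
  rw [← dart_card_eq_twice_card_edges, ← length_darts, ← List.toFinset_card_of_nodup hnodup,
    ← card_univ]
  congr 1
  exact eq_univ_of_forall fun d => List.mem_toFinset.mpr (hmem d)

theorem isEulerTour_nil [Subsingleton V] : (nil : G.Walk u u).IsEulerTour :=
  fun d => absurd (Subsingleton.elim d.fst d.snd) d.adj.ne

theorem IsEulerTour.cons_cons_map {W : Type*} {H : SimpleGraph W} (f : H ↪g G) {ℓ : V}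
    (hf : Set.range f = {ℓ}ᶜ) {x : W} (hx : G.Adj (f x) ℓ) (hℓ : ∀ y, G.Adj ℓ y → y = f x)
    {w : H.Walk x x} (hw : w.IsEulerTour) :
    (cons hx (cons hx.symm (w.map f.toHom))).IsEulerTour := by
  have hfℓ (z : W) : f z ≠ ℓ := (hf ▸ Set.mem_range_self z : f z ∈ ({ℓ}ᶜ : Set V))
  obtain ⟨hnodup, hmem⟩ := isEulerTour_iff.mp hw
  rw [isEulerTour_iff, darts_cons, darts_cons, darts_map]
  refine ⟨?_, fun d => ?_⟩
  · simp only [List.nodup_cons, List.mem_cons, List.mem_map, Dart.ext_iff, Prod.ext_iff,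
      Hom.mapDart_apply, not_or, not_exists, not_and]
    exact ⟨⟨fun h => absurd h (hfℓ x), fun e _ _ => hfℓ e.snd⟩, fun e _ h => absurd h (hfℓ e.fst),
      hnodup.map (f.toHom.mapDart_injective f.injective)⟩
  by_cases hsnd : d.snd = ℓ
  · have hd : d = ⟨(f x, ℓ), hx⟩ := Dart.ext _ _ (Prod.ext (hℓ _ (hsnd ▸ d.adj.symm)) hsnd)
    exact hd ▸ List.mem_cons_self
  by_cases hfst : d.fst = ℓ
  · have hd : d = ⟨(ℓ, f x), hx.symm⟩ := Dart.ext _ _ (Prod.ext hfst (hℓ _ (hfst ▸ d.adj)))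
    exact hd ▸ List.mem_cons_of_mem _ List.mem_cons_self
  obtain ⟨a, ha⟩ : d.fst ∈ Set.range f := hf ▸ hfst
  obtain ⟨b, hb⟩ : d.snd ∈ Set.range f := hf ▸ hsnd
  have hab : H.Adj a b := f.map_adj_iff.mp (ha ▸ hb ▸ d.adj)
  have hd : d = f.toHom.mapDart ⟨(a, b), hab⟩ := Dart.ext _ _ (Prod.ext ha.symm hb.symm)
  exact hd ▸ List.mem_cons_of_mem _ (List.mem_cons_of_mem _ (List.mem_map_of_mem (hmem _)))

end Walk

theorem IsTree.exists_isEulerTour {V : Type*} [Finite V] {T : SimpleGraph V} (hT : T.IsTree)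
    (r : V) : ∃ w : T.Walk r r, w.IsEulerTour := by
  induction V using Finite.induction_subsingleton_or_nontrivial with
  | hbase V => exact ⟨.nil, Walk.isEulerTour_nil⟩
  | hstep V ih =>
    classical
    have := Fintype.ofFinite V
    obtain ⟨ℓ, hℓ⟩ := hT.exists_vert_degree_one_of_nontrivial
    obtain ⟨x, hx, hx_unique⟩ := degree_eq_one_iff_existsUnique_adj.mp hℓ
    have hT' : (T.induce {ℓ}ᶜ).IsTree :=
      ⟨hT.connected.induce_compl_singleton_of_degree_eq_one hℓ, hT.isAcyclic.induce _⟩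
    have hcard : Nat.card ({ℓ}ᶜ : Set V) < Nat.card V := Finite.card_subtype_lt (not_not.mpr rfl)
    obtain ⟨w', hw'⟩ := ih _ hcard hT' ⟨x, hx.ne'⟩
    have hw := hw'.cons_cons_map (Embedding.induce _) Subtype.range_coe hx.symm hx_unique
    exact ⟨_, hw.rotate (hw.mem_support hT.connected.preconnected r)⟩

end SimpleGraph

theorem exists_euler_tour_general {V : Type*} [Fintype V] (T : SimpleGraph V)
    (hT : T.IsTree) (r : V) :
    ∃ w : T.Walk r r, w.IsEulerTour ∧ w.length = 2 * (Fintype.card V - 1) := by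
  classical
  obtain ⟨w, hw⟩ := hT.exists_isEulerTour r
  refine ⟨w, hw, ?_⟩
  have := hT.card_edgeFinset
  rw [hw.length_eq]
  omega

/-- Every finite tree with at least one edge has an Euler tour rooted at any
given vertex `r`: a closed walk from `r` to `r` traversing every dart exactly once; such a walk
has length `2 * (n - 1)` where `n` is the number of vertices. -/
theorem exists_euler_tour {V : Type*} [Fintype V] (T : SimpleGraph V)
    (hT : T.IsTree) (hE : T.edgeSet.Nonempty) (r : V) :
    ∃ w : T.Walk r r, w.IsEulerTour ∧ w.length = 2 * (Fintype.card V - 1) :=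
  exists_euler_tour_general T hT r
end

section
/- Let T be a finite tree, let w be an Euler tour of T rooted at a vertex r, let c be an edge of T with labels c_in < c_out, and let e be an edge of T distinct from c with labels e_in < e_out. Then both endpoints of e lie in the connected component of T with the edge c deleted that does not contain r if and only if c_in < e_in and e_out < c_out. -/
open SimpleGraph

/-- `EdgeLabels w e i j` says that `i < j` are positions in the dart list of the closed walk
`w` at which darts of the edge `e` occur; for an Euler tour these are the two labels
`e_in = i` and `e_out = j` of the edge `e`. -/
def EdgeLabels {V : Type*} {G : SimpleGraph V} {r : V} (w : G.Walk r r)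
    (e : Sym2 V) (i j : ℕ) : Prop :=
  i < j ∧ ∃ (hi : i < w.darts.length) (hj : j < w.darts.length),
    (w.darts.get ⟨i, hi⟩).edge = e ∧ (w.darts.get ⟨j, hj⟩).edge = e

/-!
Since `c` is a bridge of the tree, a walk changes sides of `T \ c` exactly when it traverses `c`.
The Euler tour traverses `c` only at steps `c_in` and `c_out`, so the vertex it reaches after
`k` steps lies on the far side iff `c_in < k ≤ c_out`. The endpoints of `e` are the vertices
reached after `e_in` and `e_in + 1` steps, and also after `e_out` and `e_out + 1` steps.
-/

namespace SimpleGraph.Walk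

variable {V : Type*} {G : SimpleGraph V}

theorem IsEulerTour.darts_nodup {r : V} {w : G.Walk r r} (hw : w.IsEulerTour) :
    w.darts.Nodup := by
  classical
  refine List.nodup_iff_count_le_one.mpr fun d => (hw d).le.trans' ?_
  rw [Subsingleton.elim (Classical.decEq G.Dart) inferInstance]

theorem eq_mk_getVert_of_getElem?_edges {u v : V} {w : G.Walk u v} {k : ℕ} {e : Sym2 V}
    (h : w.edges[k]? = some e) : e = s(w.getVert k, w.getVert (k + 1)) := by
  obtain ⟨hk, rfl⟩ := List.getElem?_eq_some_iff.mp h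
  exact getElem_edges hk

/-- An edge has only two darts. -/
theorem eq_or_eq_of_getElem?_edges {u v : V} {w : G.Walk u v} (hw : w.darts.Nodup)
    {c : Sym2 V} {i j k : ℕ} (hij : i ≠ j) (hi : w.edges[i]? = some c)
    (hj : w.edges[j]? = some c) (hk : w.edges[k]? = some c) : k = i ∨ k = j := by
  simp only [edges, List.getElem?_map, Option.map_eq_some_iff] at hi hj hk
  obtain ⟨di, hdi, rfl⟩ := hi
  obtain ⟨dj, hdj, hdj_edge⟩ := hj
  obtain ⟨dk, hdk, hdk_edge⟩ := hk
  have index_eq {m n : ℕ} {d : G.Dart} (hm : w.darts[m]? = some d) (hn : w.darts[n]? = some d) :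
      m = n :=
    (List.getElem?_inj (List.getElem?_eq_some_iff.mp hm).1 hw).mp (hm.trans hn.symm)
  have hdj_symm : dj = di.symm :=
    ((dart_edge_eq_iff _ _).mp hdj_edge).resolve_left fun h => hij (index_eq hdi (h ▸ hdj))
  rcases (dart_edge_eq_iff _ _).mp hdk_edge with rfl | rfl
  · exact .inl (index_eq hdk hdi)
  · exact .inr (index_eq hdk (hdj_symm ▸ hdj))

theorem reachable_deleteEdges_getVert {u v : V} (w : G.Walk u v) {c : Sym2 V} {a b : ℕ}
    (hab : a ≤ b) (hc : ∀ k, a ≤ k → k < b → w.edges[k]? ≠ some c) :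
    (G.deleteEdges {c}).Reachable (w.getVert a) (w.getVert b) := by
  induction b, hab using Nat.le_induction with
  | base => rfl
  | succ n han ih =>
    refine (ih fun k hak hkn => hc k hak (by omega)).trans ?_
    rcases lt_or_ge n w.length with hn | hn
    · have hedge : w.edges[n]? = some s(w.getVert n, w.getVert (n + 1)) := by
        rw [List.getElem?_eq_getElem (by simpa using hn), getElem_edges]
      refine Adj.reachable ((deleteEdges_adj ..).mpr ⟨w.adj_getVert_succ hn, ?_⟩)
      exact fun h => hc n han n.lt_succ_self (hedge.trans (congrArg some h))
    · rw [w.getVert_of_length_le hn, w.getVert_of_length_le (by omega)]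

theorem reachable_deleteEdges_getVert_iff_of_isBridge {r : V} {w : G.Walk r r}
    (hw : w.darts.Nodup) {c : Sym2 V} (hc : G.IsBridge c) {i j : ℕ} (hij : i < j)
    (hi : w.edges[i]? = some c) (hj : w.edges[j]? = some c) (k : ℕ) :
    (G.deleteEdges {c}).Reachable r (w.getVert k) ↔ k ≤ i ∨ j < k := by
  have avoids {a b : ℕ} (hab : a ≤ b) (hcross : ∀ m, a ≤ m → m < b → m ≠ i ∧ m ≠ j) :
      (G.deleteEdges {c}).Reachable (w.getVert a) (w.getVert b) :=
    w.reachable_deleteEdges_getVert hab fun m ham hmb hm =>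
      (eq_or_eq_of_getElem?_edges hw hij.ne hi hj hm).elim (hcross m ham hmb).1 (hcross m ham hmb).2
  have near {k : ℕ} (hk : k ≤ i) : (G.deleteEdges {c}).Reachable r (w.getVert k) := by
    simpa using avoids k.zero_le fun m _ hm => ⟨by omega, by omega⟩
  have hj_len : j < w.length := by simpa using (List.getElem?_eq_some_iff.mp hj).1
  refine ⟨fun hreach => ?_, ?_⟩
  · by_contra! hfar
    obtain rfl := eq_mk_getVert_of_getElem?_edges hi
    have hcross := avoids (a := i + 1) (b := k) (by omega) fun m _ hm => ⟨by omega, by omega⟩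
    exact isBridge_iff.mp hc (((near le_rfl).symm.trans hreach).trans hcross.symm)
  · rintro (hk | hk)
    · exact near hk
    rcases le_or_gt k w.length with hk_len | hk_len
    · simpa using (avoids hk_len fun m hm _ => ⟨by omega, by omega⟩).symm
    · rw [w.getVert_of_length_le hk_len.le]

end SimpleGraph.Walk

theorem edgeLabels_iff {V : Type*} {G : SimpleGraph V} {r : V} {w : G.Walk r r} {e : Sym2 V}
    {i j : ℕ} : EdgeLabels w e i j ↔ i < j ∧ w.edges[i]? = some e ∧ w.edges[j]? = some e := by
  simp [EdgeLabels, Walk.edges, List.getElem?_eq_some_iff]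

theorem edge_in_far_component_iff_general {V : Type*} {T : SimpleGraph V}
    (hT : T.IsTree) {r : V} {w : T.Walk r r} (hw : w.IsEulerTour)
    {c : Sym2 V} (hc : c ∈ T.edgeSet) {c_in c_out : ℕ} (hcl : EdgeLabels w c c_in c_out)
    {e : Sym2 V} {e_in e_out : ℕ}
    (hel : EdgeLabels w e e_in e_out) :
    (∀ v ∈ e, ¬ (T.deleteEdges {c}).Reachable r v) ↔ (c_in < e_in ∧ e_out < c_out) := by
  obtain ⟨hc_lt, hc_in, hc_out⟩ := edgeLabels_iff.mp hcl
  obtain ⟨he_lt, he_in, he_out⟩ := edgeLabels_iff.mp hel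
  have side := Walk.reachable_deleteEdges_getVert_iff_of_isBridge hw.darts_nodup
    (isAcyclic_iff_forall_isBridge.mp hT.isAcyclic hc) hc_lt hc_in hc_out
  have first_crossing := Walk.eq_mk_getVert_of_getElem?_edges he_in
  constructor
  · intro hfar
    have h_in := hfar _ (first_crossing ▸ Sym2.mem_mk_left _ _)
    have h_out := hfar _ (Walk.eq_mk_getVert_of_getElem?_edges he_out ▸ Sym2.mem_mk_right _ _)
    rw [side] at h_in h_out
    omega
  · rintro ⟨h_in, h_out⟩
    rw [first_crossing, Sym2.forall_mem_pair, side, side]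
    omega

/-- Let `w` be an Euler tour of a finite tree `T` rooted at `r`, let `c` be an
edge of `T` with labels `c_in < c_out`, and let `e ≠ c` be an edge of `T` with labels
`e_in < e_out`.  Then both endpoints of `e` lie in the connected component of `T \ c` not
containing `r` iff `c_in < e_in` and `e_out < c_out`. -/
theorem edge_in_far_component_iff {V : Type*} [Fintype V] {T : SimpleGraph V}
    (hT : T.IsTree) {r : V} {w : T.Walk r r} (hw : w.IsEulerTour)
    {c : Sym2 V} (hc : c ∈ T.edgeSet) {c_in c_out : ℕ} (hcl : EdgeLabels w c c_in c_out)
    {e : Sym2 V} (he : e ∈ T.edgeSet) (hec : e ≠ c) {e_in e_out : ℕ}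
    (hel : EdgeLabels w e e_in e_out) :
    (∀ v ∈ e, ¬ (T.deleteEdges {c}).Reachable r v) ↔ (c_in < e_in ∧ e_out < c_out) :=
  edge_in_far_component_iff_general hT hw hc hcl hel
end

section
/- Let T be a finite tree, let w be an Euler tour of T rooted at a vertex r, and let s be a vertex of T with s ≠ r. Then the edge incident to s whose smaller label e_in is minimal among all edges of T incident to s and the edge incident to s whose larger label e_out is maximal among all edges of T incident to s are the same edge. Equivalently, there is a single edge p incident to s (the parent edge of s with respect to r) such that p_in ≤ e_in and p_out ≥ e_out for every edge e of T incident to s. -/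
/-!
Let `u` be the neighbour of `s` on the path to `r`; then `p = s(s, u)` is a bridge and the side
of `s` in `T - p` does not contain `r`. The tour starts and ends outside this side and can only
enter it along the dart `(u, s)` and leave it along `(s, u)`, each traversed exactly once. So the
tour is on the side of `s` exactly between these two darts, and every dart at `s` lies between
them. Two edges with this extremal property share their smaller label, hence coincide.
-/

open SimpleGraph

theorem Nat.exists_not_and_succ_of_le {p : ℕ → Prop} {k m : ℕ} (hkm : k ≤ m) (hk : ¬ p k)
    (hm : p m) : ∃ n, k ≤ n ∧ n < m ∧ ¬ p n ∧ p (n + 1) := by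
  induction m, hkm using Nat.le_induction with
  | base => exact absurd hm hk
  | succ m hkm ih =>
    by_cases hpm : p m
    · obtain ⟨n, hkn, hnm, hn⟩ := ih hpm
      exact ⟨n, hkn, by omega, hn⟩
    · exact ⟨m, hkm, by omega, hpm, hm⟩

namespace SimpleGraph

variable {V : Type*} {G : SimpleGraph V}

theorem Dart.edge_eq_of_not_reachable_deleteEdges_iff {e : Sym2 V} {c : V} (d : G.Dart)
    (hd : ¬((G.deleteEdges {e}).Reachable d.fst c ↔ (G.deleteEdges {e}).Reachable d.snd c)) :
    d.edge = e := by
  by_contra hne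
  have hadj : (G.deleteEdges {e}).Adj d.fst d.snd :=
    (deleteEdges_adj ..).mpr ⟨d.adj, hne⟩
  exact hd ⟨hadj.symm.reachable.trans, hadj.reachable.trans⟩

theorem IsAcyclic.exists_adj_not_reachable_deleteEdges (hG : G.IsAcyclic) {s r : V}
    (hsr : G.Reachable s r) (hs : s ≠ r) :
    ∃ u, G.Adj s u ∧ ¬(G.deleteEdges {s(s, u)}).Reachable r s := by
  obtain ⟨q, hq⟩ := hsr.exists_isPath
  obtain ⟨u, hsu, q', rfl⟩ := Walk.not_nil_iff.mp (q.not_nil_of_ne hs)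
  rw [Walk.cons_isPath_iff] at hq
  have hur : (G.deleteEdges {s(s, u)}).Reachable u r :=
    reachable_deleteEdges_iff_exists_walk.mpr
      ⟨q', fun h => hq.2 (q'.fst_mem_support_of_mem_edges h)⟩
  exact ⟨u, hsu, fun hrs => isAcyclic_iff_forall_adj_isBridge.mp hG hsu
    (hur.trans hrs).symm⟩

namespace Walk

variable {x y : V}

theorem exists_getElem_darts_not_and (w : G.Walk x y) (P : V → Prop) {k m : ℕ} (hkm : k ≤ m)
    (hk : ¬ P (w.getVert k)) (hm : P (w.getVert m)) :
    ∃ n, ∃ hn : n < w.darts.length,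
      k ≤ n ∧ n < m ∧ ¬ P w.darts[n].fst ∧ P w.darts[n].snd := by
  obtain ⟨n, hkn, hnm, hn, hn'⟩ :=
    Nat.exists_not_and_succ_of_le (p := fun n => P (w.getVert n)) hkm hk hm
  have hlen : n < w.darts.length := by
    by_contra! h
    rw [w.length_darts] at h
    rw [w.getVert_of_length_le h] at hn
    rw [w.getVert_of_length_le (by omega)] at hn'
    exact hn hn'
  refine ⟨n, hlen, hkn, hnm, ?_⟩
  simpa [w.darts_getElem_eq_getVert n hlen] using And.intro hn hn'

variable {P : V → Prop} {i j : ℕ}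

theorem lt_and_le_of_getVert (w : G.Walk x y) (hx : ¬ P x) (hy : ¬ P y)
    (hin : ∀ n (hn : n < w.darts.length), ¬ P w.darts[n].fst → P w.darts[n].snd → n = i)
    (hout : ∀ n (hn : n < w.darts.length), P w.darts[n].fst → ¬ P w.darts[n].snd → n = j)
    {k : ℕ} (hk : P (w.getVert k)) : i < k ∧ k ≤ j := by
  have hkl : k ≤ w.length := by
    by_contra! h
    rw [w.getVert_of_length_le h.le] at hk
    exact hy hk
  obtain ⟨n, hn, -, hnk, hfst, hsnd⟩ :=
    w.exists_getElem_darts_not_and P k.zero_le (by rwa [w.getVert_zero]) hk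
  obtain ⟨n', hn', hkn', -, hfst', hsnd'⟩ :=
    w.exists_getElem_darts_not_and (¬ P ·) hkl (not_not.mpr hk) (by rwa [w.getVert_length])
  have := hin n hn hfst hsnd
  have := hout n' hn' (not_not.mp hfst') hsnd'
  omega

theorem le_and_le_of_getElem_darts (w : G.Walk x y) (hx : ¬ P x) (hy : ¬ P y)
    (hin : ∀ n (hn : n < w.darts.length), ¬ P w.darts[n].fst → P w.darts[n].snd → n = i)
    (hout : ∀ n (hn : n < w.darts.length), P w.darts[n].fst → ¬ P w.darts[n].snd → n = j)
    {n : ℕ} (hn : n < w.darts.length) (hP : P w.darts[n].fst ∨ P w.darts[n].snd) :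
    i ≤ n ∧ n ≤ j := by
  rw [w.darts_getElem_eq_getVert n hn] at hP
  rcases hP with hP | hP <;> have := w.lt_and_le_of_getVert hx hy hin hout hP <;> omega

variable {r : V} {w : G.Walk r r}

theorem IsEulerTour.nodup_darts (hw : w.IsEulerTour) : w.darts.Nodup := by
  let : DecidableEq G.Dart := Classical.decEq _
  exact List.nodup_iff_count_le_one.mpr fun d => (hw d).le

theorem IsEulerTour.exists_getElem_darts_eq (hw : w.IsEulerTour) (d : G.Dart) :
    ∃ i, ∃ hi : i < w.darts.length, w.darts[i] = d := by
  let : DecidableEq G.Dart := Classical.decEq _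
  exact List.getElem_of_mem (List.count_pos_iff.mp (by rw [hw d]; exact Nat.one_pos))

def IsParentEdge (w : G.Walk r r) (s : V) (p : Sym2 V) : Prop :=
  p ∈ G.edgeSet ∧ s ∈ p ∧
    ∃ p_in p_out : ℕ, EdgeLabels w p p_in p_out ∧
      ∀ e ∈ G.edgeSet, s ∈ e → ∀ e_in e_out : ℕ, EdgeLabels w e e_in e_out →
        p_in ≤ e_in ∧ e_out ≤ p_out

theorem IsParentEdge.eq {s : V} {p q : Sym2 V} (hp : w.IsParentEdge s p)
    (hq : w.IsParentEdge s q) : p = q := by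
  obtain ⟨hpE, hsp, i, j, hij, hpmin⟩ := hp
  obtain ⟨hqE, hsq, a, b, hab, hqmin⟩ := hq
  have hia := (hpmin q hqE hsq a b hab).1
  have hai := (hqmin p hpE hsp i j hij).1
  obtain ⟨-, hi, -, hpi, -⟩ := hij
  obtain ⟨-, ha, -, hqa, -⟩ := hab
  obtain rfl : a = i := le_antisymm hai hia
  exact hpi.symm.trans hqa

theorem IsEulerTour.isParentEdge_of_not_reachable (hw : w.IsEulerTour) {s u : V}
    (hsu : G.Adj s u) (hr : ¬(G.deleteEdges {s(s, u)}).Reachable r s) :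
    w.IsParentEdge s s(s, u) := by
  set P : V → Prop := fun v => (G.deleteEdges {s(s, u)}).Reachable v s
  have hPs : P s := Reachable.refl s
  let d : G.Dart := ⟨(s, u), hsu⟩
  obtain ⟨i, hi, hdi⟩ := hw.exists_getElem_darts_eq d.symm
  obtain ⟨j, hj, hdj⟩ := hw.exists_getElem_darts_eq d
  have hcross : ∀ n (hn : n < w.darts.length),
      ¬(P w.darts[n].fst ↔ P w.darts[n].snd) →
      w.darts[n] = d.symm ∧ n = i ∨ w.darts[n] = d ∧ n = j := by
    intro n hn hcut
    rcases (dart_edge_eq_iff _ d).mp (w.darts[n].edge_eq_of_not_reachable_deleteEdges_iff hcut)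
      with h | h
    · exact .inr ⟨h, hw.nodup_darts.getElem_inj_iff.mp (h.trans hdj.symm)⟩
    · exact .inl ⟨h, hw.nodup_darts.getElem_inj_iff.mp (h.trans hdi.symm)⟩
  have hin : ∀ n (hn : n < w.darts.length),
      ¬ P w.darts[n].fst → P w.darts[n].snd → n = i := by
    intro n hn hfst hsnd
    rcases hcross n hn (by tauto) with ⟨-, rfl⟩ | ⟨hd, -⟩
    · rfl
    · exact absurd (hd ▸ hPs) hfst
  have hout : ∀ n (hn : n < w.darts.length),
      P w.darts[n].fst → ¬ P w.darts[n].snd → n = j := by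
    intro n hn hfst hsnd
    rcases hcross n hn (by tauto) with ⟨hd, -⟩ | ⟨-, rfl⟩
    · exact absurd (hd ▸ hPs) hsnd
    · rfl
  have hbounds : ∀ n (hn : n < w.darts.length),
      s ∈ w.darts[n].edge → i ≤ n ∧ n ≤ j := by
    intro n hn hs
    refine w.le_and_le_of_getElem_darts hr hr hin hout hn ?_
    rcases Sym2.mem_iff.mp hs with h | h
    · exact .inl (h ▸ hPs)
    · exact .inr (h ▸ hPs)
  have hij : i < j := by
    refine lt_of_le_of_ne (hbounds i hi (by simp [hdi, d])).2 ?_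
    rintro rfl
    exact d.symm_ne (hdi.symm.trans hdj)
  refine ⟨hsu, Sym2.mem_mk_left s u, i, j,
    ⟨hij, hi, hj, by simp [hdi, d], by simp [hdj, d]⟩, ?_⟩
  rintro e - hse e_in e_out ⟨-, hin', hout', hein, heout⟩
  rw [List.get_eq_getElem] at hein heout
  exact ⟨(hbounds e_in hin' (hein ▸ hse)).1, (hbounds e_out hout' (heout ▸ hse)).2⟩

end Walk
end SimpleGraph

theorem exists_unique_parent_edge_general {V : Type*} {T : SimpleGraph V}
    (hT : T.IsTree) {r : V} {w : T.Walk r r} (hw : w.IsEulerTour)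
    (s : V) (hs : s ≠ r) :
    ∃! p : Sym2 V, p ∈ T.edgeSet ∧ s ∈ p ∧
      ∃ p_in p_out : ℕ, EdgeLabels w p p_in p_out ∧
        ∀ e ∈ T.edgeSet, s ∈ e → ∀ e_in e_out : ℕ, EdgeLabels w e e_in e_out →
          p_in ≤ e_in ∧ e_out ≤ p_out := by
  obtain ⟨u, hsu, hr⟩ :=
    hT.isAcyclic.exists_adj_not_reachable_deleteEdges (hT.connected s r) hs
  have hp := hw.isParentEdge_of_not_reachable hsu hr
  exact ⟨s(s, u), hp, fun q (hq : w.IsParentEdge s q) => hq.eq hp⟩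

/-- Let `w` be an Euler tour of a finite tree `T` rooted at `r` and let
`s ≠ r` be a vertex.  Then there is a single edge `p` of `T` incident to `s` (the parent edge
of `s` with respect to `r`) whose labels satisfy `p_in ≤ e_in` and `p_out ≥ e_out` for the
labels of every edge `e` of `T` incident to `s`. -/
theorem exists_unique_parent_edge {V : Type*} [Fintype V] {T : SimpleGraph V}
    (hT : T.IsTree) {r : V} {w : T.Walk r r} (hw : w.IsEulerTour)
    (s : V) (hs : s ≠ r) :
    ∃! p : Sym2 V, p ∈ T.edgeSet ∧ s ∈ p ∧
      ∃ p_in p_out : ℕ, EdgeLabels w p p_in p_out ∧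
        ∀ e ∈ T.edgeSet, s ∈ e → ∀ e_in e_out : ℕ, EdgeLabels w e e_in e_out →
          p_in ≤ e_in ∧ e_out ≤ p_out :=
  exists_unique_parent_edge_general hT hw s hs
end

section
/- Let T be a finite tree, let w be an Euler tour of T rooted at a vertex r, and let c be an edge of T with labels c_in < c_out. Then the darts of w occurring at positions strictly between c_in and c_out are precisely the darts of those edges of T whose endpoints both lie in the connected component of T with c deleted that does not contain r, and each such dart occurs exactly once among these positions. -/
/-!
Since `c` is a bridge of the tree, a walk from `r` stands on the far side of `T \ c` exactly when it
has traversed `c` an odd number of times. The darts of an Euler tour are distinct, so `c` is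
traversed only at the positions `c_in` and `c_out`, and the vertex reached after `k` steps is on
the far side iff `c_in < k ≤ c_out`. A dart at position `i` joins the vertices reached after `i`
and `i + 1` steps, so both its endpoints are on the far side iff `c_in < i < c_out`.
-/

open SimpleGraph

theorem List.Nodup.existsUnique_get_eq_getElem_iff {α : Type*} {l : List α} (hl : l.Nodup)
    {P : ℕ → Prop} {i : ℕ} (hi : i < l.length) :
    (∃! j : ℕ, ∃ hj : j < l.length, P j ∧ l.get ⟨j, hj⟩ = l[i]) ↔ P i := by
  simp only [List.get_eq_getElem]
  constructor
  · rintro ⟨j, ⟨hj, hPj, hji⟩, -⟩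
    rwa [← hl.getElem_inj_iff.mp hji]
  · intro hP
    refine ⟨i, ⟨hi, hP, rfl⟩, ?_⟩
    rintro j ⟨hj, -, hji⟩
    exact hl.getElem_inj_iff.mp hji

namespace SimpleGraph

variable {V : Type*} {G : SimpleGraph V}

theorem edge_getElem_eq_iff_of_nodup {l : List G.Dart} (hl : l.Nodup) {i j : ℕ} (hij : i ≠ j)
    (hi : i < l.length) (hj : j < l.length) {e : Sym2 V} (hie : l[i].edge = e)
    (hje : l[j].edge = e) {m : ℕ} (hm : m < l.length) : l[m].edge = e ↔ m = i ∨ m = j := by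
  subst hie
  have hji : l[j] = l[i].symm :=
    ((dart_edge_eq_iff _ _).mp hje).resolve_left fun h => hij (hl.getElem_inj_iff.mp h).symm
  refine ⟨fun hme => ?_, by rintro (rfl | rfl) <;> simp [hje]⟩
  rcases (dart_edge_eq_iff _ _).mp hme with h | h
  · exact .inl (hl.getElem_inj_iff.mp h)
  · exact .inr (hl.getElem_inj_iff.mp (h.trans hji.symm))

theorem Walk.reachable_deleteEdges_left_or_right {u a : V} (p : G.Walk u a) (b : V) :
    (G.deleteEdges {s(a, b)}).Reachable u a ∨ (G.deleteEdges {s(a, b)}).Reachable u b := by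
  induction p with
  | nil => exact .inl .rfl
  | @cons u x a hux q ih =>
    by_cases he : s(u, x) = s(a, b)
    · rcases Sym2.eq_iff.mp he with ⟨rfl, -⟩ | ⟨rfl, -⟩
      · exact .inl .rfl
      · exact .inr .rfl
    · have hadj : (G.deleteEdges {s(a, b)}).Adj u x := by simp [hux, he]
      exact ih.imp hadj.reachable.trans hadj.reachable.trans

theorem Adj.reachable_deleteEdges_iff {u v : V} (h : G.Adj u v) {e : Sym2 V} (he : s(u, v) ≠ e)
    (r : V) : (G.deleteEdges {e}).Reachable r u ↔ (G.deleteEdges {e}).Reachable r v := by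
  have hadj : (G.deleteEdges {e}).Adj u v := deleteEdges_adj.mpr ⟨h, he⟩
  exact ⟨(·.trans hadj.reachable), (·.trans hadj.symm.reachable)⟩

theorem IsBridge.reachable_deleteEdges_iff_not {u v r : V} (h : G.IsBridge s(u, v))
    (hr : G.Reachable r u) :
    (G.deleteEdges {s(u, v)}).Reachable r u ↔ ¬ (G.deleteEdges {s(u, v)}).Reachable r v := by
  refine ⟨fun hu hv => h (hu.symm.trans hv), fun hv => ?_⟩
  obtain ⟨p⟩ := hr
  exact (p.reachable_deleteEdges_left_or_right v).resolve_right hv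

theorem Walk.not_reachable_deleteEdges_getVert_iff {r v : V} (p : G.Walk r v)
    (hp : p.darts.Nodup) {e : Sym2 V} (he : G.IsBridge e) {i j : ℕ} (hij : i < j)
    (hi : i < p.darts.length) (hj : j < p.darts.length) (hie : p.darts[i].edge = e)
    (hje : p.darts[j].edge = e) {k : ℕ} (hk : k ≤ p.length) :
    ¬ (G.deleteEdges {e}).Reachable r (p.getVert k) ↔ i < k ∧ k ≤ j := by
  induction k with
  | zero => simp
  | succ k ih =>
    have hk' : k < p.darts.length := by simpa using hk
    have hpos := edge_getElem_eq_iff_of_nodup hp hij.ne hi hj hie hje hk'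
    rw [darts_getElem_eq_getVert, Dart.edge_mk] at hpos
    specialize ih (by omega)
    by_cases hcross : s(p.getVert k, p.getVert (k + 1)) = e
    · subst hcross
      have := he.reachable_deleteEdges_iff_not ⟨p.take k⟩
      grind
    · have := (p.adj_getVert_succ (by omega)).reachable_deleteEdges_iff hcross r
      grind

theorem Walk.IsEulerTour.nodup_darts_s5 {r : V} {w : G.Walk r r} (hw : w.IsEulerTour) :
    w.darts.Nodup :=
  letI : DecidableEq G.Dart := Classical.decEq _
  List.nodup_iff_count_le_one.mpr fun d => (hw d).le

theorem Walk.IsEulerTour.mem_darts {r : V} {w : G.Walk r r} (hw : w.IsEulerTour) (d : G.Dart) :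
    d ∈ w.darts :=
  letI : DecidableEq G.Dart := Classical.decEq _
  List.count_pos_iff.mp (by rw [hw d]; exact Nat.one_pos)

end SimpleGraph

theorem darts_between_labels_general {V : Type*} {T : SimpleGraph V}
    (hT : T.IsTree) {r : V} {w : T.Walk r r} (hw : w.IsEulerTour)
    {c : Sym2 V} (hc : c ∈ T.edgeSet) {c_in c_out : ℕ} (hcl : EdgeLabels w c c_in c_out) :
    ∀ d : T.Dart,
      (∀ v ∈ d.edge, ¬ (T.deleteEdges {c}).Reachable r v) ↔
        (∃! i : ℕ, ∃ hi : i < w.darts.length,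
          c_in < i ∧ i < c_out ∧ w.darts.get ⟨i, hi⟩ = d) := by
  obtain ⟨hlt, hin, hout, hcin, hcout⟩ := hcl
  have hbridge : T.IsBridge c := isAcyclic_iff_forall_isBridge.mp hT.isAcyclic hc
  have far {k : ℕ} (hk : k ≤ w.length) :=
    w.not_reachable_deleteEdges_getVert_iff hw.nodup_darts_s5 hbridge hlt hin hout hcin hcout hk
  intro d
  obtain ⟨i, hi, rfl⟩ := List.getElem_of_mem (hw.mem_darts d)
  have hlen := w.length_darts
  simp only [← and_assoc]
  rw [hw.nodup_darts_s5.existsUnique_get_eq_getElem_iff hi, Walk.darts_getElem_eq_getVert,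
    Dart.edge_mk, Sym2.forall_mem_pair, far (k := i) (by omega), far (k := i + 1) (by omega)]
  omega

/-- Let `w` be an Euler tour of a finite tree `T` rooted at `r` and let `c`
be an edge of `T` with labels `c_in < c_out`.  The darts occurring in `w` at positions strictly
between `c_in` and `c_out` are precisely the darts of the edges of `T` both of whose endpoints
lie in the connected component of `T \ c` not containing `r`, with each such dart occurring
exactly once among those positions. -/
theorem darts_between_labels {V : Type*} [Fintype V] {T : SimpleGraph V}
    (hT : T.IsTree) {r : V} {w : T.Walk r r} (hw : w.IsEulerTour)
    {c : Sym2 V} (hc : c ∈ T.edgeSet) {c_in c_out : ℕ} (hcl : EdgeLabels w c c_in c_out) :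
    ∀ d : T.Dart,
      (∀ v ∈ d.edge, ¬ (T.deleteEdges {c}).Reachable r v) ↔
        (∃! i : ℕ, ∃ hi : i < w.darts.length,
          c_in < i ∧ i < c_out ∧ w.darts.get ⟨i, hi⟩ = d) :=
  darts_between_labels_general hT hw hc hcl
end

section
/- Let T be a spanning tree of a finite connected simple graph G, let F be the set of edges of G not in T, and let M' be the spanning subgraph of T whose edge set consists of those edges e of T for which G with e deleted is still connected. Then every vertex of degree exactly 1 in M' is an endpoint of some edge of F. -/
open SimpleGraph

/-- Given a connected graph `G` with spanning tree `T`, the spanning subgraph `M'` of `T`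
whose edges are exactly those edges of `T` whose deletion from `G` leaves `G` connected. -/
def cycleEdgesSubgraph {V : Type*} (G T : SimpleGraph V) : SimpleGraph V where
  Adj a b := T.Adj a b ∧ (G.deleteEdges {s(a, b)}).Connected
  symm := ⟨fun a b h => ⟨h.1.symm, by rw [Sym2.eq_swap]; exact h.2⟩⟩
  loopless := ⟨fun a h => T.loopless.irrefl a h.1⟩

namespace SimpleGraph

variable {V : Type*} {G : SimpleGraph V}

/-- Take `u` to be the second vertex of a path from `v` to `w` avoiding `vw`: the rest of that
path, followed by `wv`, joins `u` to `v` without using `vu`. -/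
lemma exists_adj_ne_connected_deleteEdges {v w : V} (hvw : G.Adj v w)
    (h : (G.deleteEdges {s(v, w)}).Connected) :
    ∃ u, u ≠ w ∧ G.Adj v u ∧ (G.deleteEdges {s(v, u)}).Connected := by
  classical
  obtain ⟨p, hp⟩ := reachable_deleteEdges_iff_exists_walk.mp (h.preconnected v w)
  cases hpath : p.bypass with
  | nil => exact absurd rfl hvw.ne
  | @cons _ u _ hvu q =>
    have hq : q.IsPath ∧ v ∉ q.support := by
      simpa [hpath] using p.bypass_isPath
    have hvw_notMem : s(v, w) ∉ s(v, u) :: q.edges := fun he =>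
      hp (p.edges_bypass_subset_edges (by rwa [hpath, Walk.edges_cons]))
    have huw : u ≠ w := by rintro rfl; simp at hvw_notMem
    refine ⟨u, huw, hvu, (h.mono (deleteEdges_le _)).connected_delete_edge_of_not_isBridge ?_⟩
    rw [isBridge_iff, not_not, reachable_comm, reachable_deleteEdges_iff_exists_walk]
    refine ⟨q.concat hvw.symm, fun he => ?_⟩
    rw [Walk.edges_concat, List.concat_eq_append, List.mem_append, List.mem_singleton] at he
    rcases he with he | he
    · exact hq.2 (q.fst_mem_support_of_mem_edges he)
    · grind

end SimpleGraph

theorem leaf_of_cycleEdges_touches_nontree_edge_general {V : Type*}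
    {G T : SimpleGraph V} (hTG : T ≤ G)
    (v : V) (hv : ((cycleEdgesSubgraph G T).neighborSet v).ncard = 1) :
    ∃ f ∈ G.edgeSet \ T.edgeSet, v ∈ f := by
  by_contra! hv_tree
  obtain ⟨w, hw⟩ := Set.ncard_eq_one.mp hv
  obtain ⟨hTvw, hvw⟩ : (cycleEdgesSubgraph G T).Adj v w := by
    rw [← mem_neighborSet, hw]; rfl
  obtain ⟨u, huw, hGvu, hvu⟩ := exists_adj_ne_connected_deleteEdges (hTG hTvw) hvw
  have hTvu : T.Adj v u := by
    by_contra hTvu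
    exact hv_tree s(v, u) ⟨hGvu, hTvu⟩ (Sym2.mem_mk_left v u)
  have hu : u ∈ (cycleEdgesSubgraph G T).neighborSet v := ⟨hTvu, hvu⟩
  exact huw (by simpa [hw] using hu)

/-- Let `T` be a spanning tree of a finite connected simple graph `G`, let
`F = G.edgeSet \ T.edgeSet`, and let `M'` be the spanning subgraph of `T` whose edges are the
edges `e` of `T` such that `G` with `e` deleted is still connected.  Then every vertex of
degree exactly `1` in `M'` is an endpoint of some edge of `F`. -/
theorem leaf_of_cycleEdges_touches_nontree_edge {V : Type*} [Fintype V]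
    {G T : SimpleGraph V} (hG : G.Connected) (hT : T.IsTree) (hTG : T ≤ G)
    (v : V) (hv : ((cycleEdgesSubgraph G T).neighborSet v).ncard = 1) :
    ∃ f ∈ G.edgeSet \ T.edgeSet, v ∈ f :=
  leaf_of_cycleEdges_touches_nontree_edge_general hTG v hv
end

section
/- Let G be a finite connected simple graph, let T be a spanning tree of G, and let F be the set of edges of G not in T, with |F| = k. Then the edge set of T can be partitioned into at most 4k + 1 sets such that: (1) every edge of T belongs to exactly one set, and (2) for every set S of the partition and every pair of distinct edges e, e' ∈ S, the graph G with both e and e' deleted is disconnected. In particular, at most one edge from each set can be removed from G while keeping the remaining graph connected. -/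
/-!
Root `T` at a vertex `r`. For a tree edge `e`, let `X e` be the side of `T - e` not containing
`r`; the only tree edge leaving `X e` is `e`. Group the tree edges by the trace of `X e` on the
set `M` of endpoints of non-tree edges, so `|M| ≤ 2k`. If `e ≠ e'` have the same trace, no
non-tree edge has an endpoint in `X e ∆ X e'`, so `e` and `e'` are the only edges of `G` leaving
this nonempty set, which avoids `r`. The sets `X e` form a laminar family, hence so do their
traces, and a laminar family of subsets of `M` has at most `2|M| + 1` members.
-/

open SimpleGraph

def IsLaminar {β : Type*} [PartialOrder β] [OrderBot β] (𝓕 : Set β) : Prop :=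
  ∀ S ∈ 𝓕, ∀ T ∈ 𝓕, S ≤ T ∨ T ≤ S ∨ Disjoint S T

theorem IsLaminar.image {β γ : Type*} [PartialOrder β] [OrderBot β] [PartialOrder γ] [OrderBot γ]
    {𝓕 : Set β} (h : IsLaminar 𝓕) {f : β → γ} (hf : Monotone f)
    (hdisj : ∀ S T, Disjoint S T → Disjoint (f S) (f T)) : IsLaminar (f '' 𝓕) := by
  rintro _ ⟨S, hS, rfl⟩ _ ⟨T, hT, rfl⟩
  rcases h S hS T hT with h | h | h
  exacts [Or.inl (hf h), Or.inr (Or.inl (hf h)), Or.inr (Or.inr (hdisj S T h))]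

namespace IsLaminar

open Finset

variable {α : Type*} [DecidableEq α] {𝓕 : Finset (Finset α)} {x : α}

theorem eq_of_insert_mem (h : IsLaminar (𝓕 : Set (Finset α))) {S S' : Finset α}
    (hS : S ∈ 𝓕) (hS' : S' ∈ 𝓕) (hxS : insert x S ∈ 𝓕) (hxS' : insert x S' ∈ 𝓕)
    (hx : x ∉ S) (hx' : x ∉ S') (hne : S.Nonempty) (hne' : S'.Nonempty) : S = S' := by
  wlog hle : insert x S ⊆ insert x S' generalizing S S'
  · rcases h _ hxS _ hxS' with h' | h' | h'
    · exact absurd h' hle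
    · exact (this hS' hS hxS' hxS hx' hx hne' hne h').symm
    · exact absurd h' (not_disjoint_iff.2 ⟨x, mem_insert_self _ _, mem_insert_self _ _⟩)
  have hSS' : S ⊆ S' := (insert_subset_insert_iff hx).1 hle
  rcases h _ hxS _ hS' with h' | h' | h'
  · exact absurd (h' (mem_insert_self x S)) hx'
  · exact hSS'.antisymm ((subset_insert_iff_of_notMem hx').1 h')
  · obtain ⟨y, hy⟩ := hne
    exact (Finset.disjoint_left.1 h' (mem_insert_of_mem hy) (hSS' hy)).elim

theorem card_filter_insert_mem_le_two (h : IsLaminar (𝓕 : Set (Finset α))) (x : α) :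
    #{S ∈ 𝓕 | x ∉ S ∧ insert x S ∈ 𝓕} ≤ 2 := by
  set C := {S ∈ 𝓕 | x ∉ S ∧ insert x S ∈ 𝓕}
  have hC : #(C.erase ∅) ≤ 1 := by
    refine card_le_one.2 fun S hS S' hS' => ?_
    simp only [C, mem_erase, mem_filter] at hS hS'
    exact h.eq_of_insert_mem hS.2.1 hS'.2.1 hS.2.2.2 hS'.2.2.2 hS.2.2.1 hS'.2.2.1
      (nonempty_iff_ne_empty.2 hS.1) (nonempty_iff_ne_empty.2 hS'.1)
  have := pred_card_le_card_erase (s := C) (a := ∅)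
  omega

/-- Erasing `x` merges `S` with `insert x S`; by laminarity this happens only for `S = ∅` and for
at most one other `S`. -/
theorem card_le_card_image_erase_add_two (h : IsLaminar (𝓕 : Set (Finset α))) (x : α) :
    #𝓕 ≤ #(𝓕.image (·.erase x)) + 2 := by
  set C := {S ∈ 𝓕 | x ∉ S ∧ insert x S ∈ 𝓕}
  have hinj : #(𝓕 \ C) ≤ #(𝓕.image (·.erase x)) := by
    refine card_le_card_of_injOn _ (fun S hS => mem_image_of_mem _ (mem_sdiff.1 hS).1) ?_
    intro S₁ h₁ S₂ h₂ (heq : S₁.erase x = S₂.erase x)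
    simp only [C, coe_sdiff, coe_filter, Set.mem_sdiff, Set.mem_ofPred_eq, mem_coe] at h₁ h₂
    by_cases hx₁ : x ∈ S₁ <;> by_cases hx₂ : x ∈ S₂
    · rw [← insert_erase hx₁, ← insert_erase hx₂]
      exact congrArg (insert x) heq
    · rw [erase_eq_of_notMem hx₂] at heq
      have : insert x S₂ = S₁ := heq ▸ insert_erase hx₁
      exact absurd ⟨h₂.1, hx₂, this ▸ h₁.1⟩ h₂.2
    · rw [erase_eq_of_notMem hx₁] at heq
      have : insert x S₁ = S₂ := heq ▸ insert_erase hx₂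
      exact absurd ⟨h₁.1, hx₁, this ▸ h₂.1⟩ h₁.2
    · rwa [erase_eq_of_notMem hx₁, erase_eq_of_notMem hx₂] at heq
  have : #(𝓕 \ C) + #C = #𝓕 := card_sdiff_add_card_eq_card (filter_subset _ _)
  have : #C ≤ 2 := h.card_filter_insert_mem_le_two x
  omega

theorem card_le (h : IsLaminar (𝓕 : Set (Finset α))) {X : Finset α} (hX : ∀ S ∈ 𝓕, S ⊆ X) :
    #𝓕 ≤ 2 * #X + 1 := by
  induction X using Finset.induction_on generalizing 𝓕 with
  | empty =>
    exact card_le_one.2 fun S hS S' hS' =>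
      (subset_empty.1 (hX S hS)).trans (subset_empty.1 (hX S' hS')).symm
  | insert x X hx ih =>
    have hlam : IsLaminar ((𝓕.image (·.erase x) : Finset (Finset α)) : Set (Finset α)) := by
      rw [coe_image]
      exact h.image (fun _ _ => erase_subset_erase x) fun _ _ hST =>
        hST.mono (erase_subset x _) (erase_subset x _)
    have hsub : ∀ S ∈ 𝓕.image (·.erase x), S ⊆ X := by
      simp only [mem_image, forall_exists_index, and_imp, forall_apply_eq_imp_iff₂]
      exact fun S hS => subset_insert_iff.1 (hX S hS)
    have := ih hlam hsub
    have := h.card_le_card_image_erase_add_two x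
    rw [card_insert_of_notMem hx]
    omega

theorem card_image_filter_mem_le {ι : Type*} {s : Finset ι} {X : ι → Set α}
    (h : IsLaminar (X '' s)) (M : Finset α) [∀ i, DecidablePred (· ∈ X i)] :
    #(s.image fun i => {u ∈ M | u ∈ X i}) ≤ 2 * #M + 1 := by
  refine IsLaminar.card_le ?_ (by simp)
  rw [coe_image]
  rintro _ ⟨i, hi, rfl⟩ _ ⟨j, hj, rfl⟩
  rcases h _ ⟨i, hi, rfl⟩ _ ⟨j, hj, rfl⟩ with hij | hij | hij
  · exact .inl (monotone_filter_right M fun u _ hu => hij hu)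
  · exact .inr (.inl (monotone_filter_right M fun u _ hu => hij hu))
  · exact .inr (.inr (disjoint_filter.2 fun u _ hi hj => Set.disjoint_left.1 hij hi hj))

end IsLaminar

theorem Finset.card_biUnion_sym2_toFinset_le {α : Type*} [DecidableEq α] (s : Finset (Sym2 α)) :
    (s.biUnion Sym2.toFinset).card ≤ 2 * s.card := by
  rw [mul_comm]
  refine card_biUnion_le_card_mul _ _ 2 fun z _ => ?_
  rw [Sym2.card_toFinset]
  split_ifs <;> simp

theorem Finset.exists_partition_fibers {α β : Type*} [DecidableEq β] (s : Finset α) (f : α → β) :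
    ∃ P : Finset (Set α), P.card ≤ (s.image f).card ∧ (∀ S ∈ P, S ⊆ s) ∧
      (∀ x ∈ s, ∃! S, S ∈ P ∧ x ∈ S) ∧ ∀ S ∈ P, ∀ x ∈ S, ∀ y ∈ S, f x = f y := by
  classical
  refine ⟨(s.image f).image fun c => {x | x ∈ s ∧ f x = c}, card_image_le, ?_, ?_, ?_⟩
  · intro S hS
    obtain ⟨c, -, rfl⟩ := mem_image.1 hS
    exact fun x hx => hx.1
  · intro x hx
    refine ⟨{y | y ∈ s ∧ f y = f x}, ⟨mem_image_of_mem _ (mem_image_of_mem f hx), hx, rfl⟩, ?_⟩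
    rintro _ ⟨hS, hxS⟩
    obtain ⟨c, -, rfl⟩ := mem_image.1 hS
    rw [hxS.2]
  · intro S hS
    obtain ⟨c, -, rfl⟩ := mem_image.1 hS
    rintro x ⟨-, rfl⟩ y ⟨-, hy⟩
    exact hy.symm

namespace SimpleGraph

variable {V : Type*} {T : SimpleGraph V} {r a b u v : V}

def descendants (T : SimpleGraph V) (r a : V) : Set V :=
  {u | ∃ p : T.Walk r u, p.IsPath ∧ a ∈ p.support}

/-- For an edge `e` of a tree `T` this is the component of `T - e` avoiding `r`. -/
def edgeDescendants (T : SimpleGraph V) (r : V) (e : Sym2 V) : Set V :=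
  {u | ∀ a ∈ e, u ∈ T.descendants r a}

namespace IsAcyclic

theorem mem_descendants_iff (hT : T.IsAcyclic) {p : T.Walk r u} (hp : p.IsPath) :
    u ∈ T.descendants r a ↔ a ∈ p.support := by
  refine ⟨fun ⟨q, hq, ha⟩ => ?_, fun ha => ⟨p, hp, ha⟩⟩
  have hpq : p = q := congrArg Subtype.val ((hT.subsingleton_path r u).elim ⟨p, hp⟩ ⟨q, hq⟩)
  rwa [hpq]

theorem root_mem_descendants_iff (hT : T.IsAcyclic) : r ∈ T.descendants r a ↔ a = r := by
  simp [hT.mem_descendants_iff Walk.IsPath.nil]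

theorem descendants_subset (hT : T.IsAcyclic) (h : b ∈ T.descendants r a) :
    T.descendants r b ⊆ T.descendants r a := by
  classical
  rintro u ⟨q, hq, hb⟩
  exact ⟨q, hq, q.support_takeUntil_subset_support hb
    ((hT.mem_descendants_iff (hq.takeUntil hb)).1 h)⟩

theorem mem_descendants_or_mem_descendants (hT : T.IsAcyclic) (ha : u ∈ T.descendants r a)
    (hb : u ∈ T.descendants r b) : b ∈ T.descendants r a ∨ a ∈ T.descendants r b := by
  classical
  obtain ⟨p, hp, ha⟩ := ha
  have hb := (hT.mem_descendants_iff hp).1 hb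
  rcases List.prefix_or_prefix_of_prefix (p.support_takeUntil_prefix_support ha)
    (p.support_takeUntil_prefix_support hb) with h | h
  · exact .inl ⟨_, hp.takeUntil hb, h.subset (Walk.end_mem_support _)⟩
  · exact .inr ⟨_, hp.takeUntil ha, h.subset (Walk.end_mem_support _)⟩

theorem isLaminar_range_descendants (hT : T.IsAcyclic) (r : V) :
    IsLaminar (Set.range (T.descendants r)) := by
  rintro _ ⟨a, rfl⟩ _ ⟨b, rfl⟩
  rw [← or_assoc]
  refine or_iff_not_imp_right.2 fun h => ?_
  obtain ⟨u, ha, hb⟩ := Set.not_disjoint_iff.1 h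
  exact (hT.mem_descendants_or_mem_descendants ha hb).symm.imp
    hT.descendants_subset hT.descendants_subset

theorem edgeDescendants_eq (hT : T.IsAcyclic) (h : a ∈ T.descendants r b) :
    T.edgeDescendants r s(a, b) = T.descendants r a := by
  ext u
  simp only [edgeDescendants, Sym2.mem_iff, forall_eq_or_imp, forall_eq, Set.mem_ofPred_eq]
  exact ⟨And.left, fun hu => ⟨hu, hT.descendants_subset h hu⟩⟩

end IsAcyclic

namespace IsTree

theorem mem_descendants_or_mem_descendants_of_adj (hT : T.IsTree) (r : V) (hab : T.Adj a b) :
    a ∈ T.descendants r b ∨ b ∈ T.descendants r a := by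
  obtain ⟨p, hp⟩ := (hT.connected r a).exists_isPath
  obtain ⟨q, hq⟩ := (hT.connected r b).exists_isPath
  by_cases ha : a ∈ q.support
  · exact .inr ⟨q, hq, ha⟩
  · exact .inl ⟨p, hp, hT.isAcyclic.mem_support_of_ne_mem_support_of_adj_of_isPath hp hq hab ha⟩

theorem notMem_descendants_of_adj (hT : T.IsTree) (hab : T.Adj a b)
    (ha : a ∈ T.descendants r b) : b ∉ T.descendants r a := by
  obtain ⟨p, hp, hb⟩ := ha
  obtain ⟨q, hq⟩ := (hT.connected r b).exists_isPath
  rw [hT.isAcyclic.mem_descendants_iff hq]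
  exact hT.isAcyclic.ne_mem_support_of_support_of_adj_of_isPath hp hq hab hb

/-- Only the edge to its parent `b` leaves the subtree of `a`. -/
theorem eq_of_adj_of_mem_descendants (hT : T.IsTree) (hab : T.Adj a b)
    (ha : a ∈ T.descendants r b) (huv : T.Adj u v) (hu : u ∈ T.descendants r a)
    (hv : v ∉ T.descendants r a) : s(u, v) = s(a, b) := by
  rcases hT.mem_descendants_or_mem_descendants_of_adj r huv with h | h
  · obtain ⟨p, hp, hpv⟩ := h
    obtain ⟨q, hq⟩ := (hT.connected r v).exists_isPath
    have hpq := hT.isAcyclic.path_concat hq hp huv.symm hpv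
    have hau : a = u := by
      have ha' := (hT.isAcyclic.mem_descendants_iff hp).1 hu
      rw [hpq, Walk.support_concat, List.mem_append, List.mem_singleton] at ha'
      exact ha'.resolve_left fun h => hv ⟨q, hq, h⟩
    subst hau
    have hb := (hT.isAcyclic.mem_descendants_iff hp).1 ha
    rw [hT.isAcyclic.eq_penultimate_of_adj_end hp hab hb,
      ← hT.isAcyclic.eq_penultimate_of_adj_end hp huv hpv]
  · exact absurd (hT.isAcyclic.descendants_subset hu h) hv

theorem exists_eq_of_mem_edgeSet (hT : T.IsTree) (r : V) {e : Sym2 V} (he : e ∈ T.edgeSet) :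
    ∃ a b, T.Adj a b ∧ a ∈ T.descendants r b ∧ e = s(a, b) := by
  induction e using Sym2.ind with
  | _ a b =>
    rcases hT.mem_descendants_or_mem_descendants_of_adj r he with h | h
    · exact ⟨a, b, he, h, rfl⟩
    · exact ⟨b, a, T.adj_symm he, h, Sym2.eq_swap⟩

theorem root_notMem_edgeDescendants (hT : T.IsTree) {e : Sym2 V} (he : e ∈ T.edgeSet) :
    r ∉ T.edgeDescendants r e := by
  obtain ⟨a, b, hab, ha, rfl⟩ := hT.exists_eq_of_mem_edgeSet r he
  rw [hT.isAcyclic.edgeDescendants_eq ha, hT.isAcyclic.root_mem_descendants_iff]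
  rintro rfl
  exact hab.ne (hT.isAcyclic.root_mem_descendants_iff.1 ha).symm

theorem eq_of_adj_of_mem_edgeDescendants_iff (hT : T.IsTree) {e : Sym2 V} (he : e ∈ T.edgeSet)
    (huv : T.Adj u v) (h : u ∈ T.edgeDescendants r e ↔ v ∉ T.edgeDescendants r e) :
    s(u, v) = e := by
  obtain ⟨a, b, hab, ha, rfl⟩ := hT.exists_eq_of_mem_edgeSet r he
  rw [hT.isAcyclic.edgeDescendants_eq ha] at h
  by_cases hu : u ∈ T.descendants r a
  · exact hT.eq_of_adj_of_mem_descendants hab ha huv hu (h.1 hu)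
  · rw [Sym2.eq_swap]
    exact hT.eq_of_adj_of_mem_descendants hab ha huv.symm (not_not.1 (mt h.2 hu)) hu

theorem injOn_edgeDescendants (hT : T.IsTree) (r : V) :
    Set.InjOn (T.edgeDescendants r) T.edgeSet := by
  intro e he e' he' hee'
  obtain ⟨a, b, hab, ha, rfl⟩ := hT.exists_eq_of_mem_edgeSet r he
  have hcross : a ∈ T.edgeDescendants r e' ↔ b ∉ T.edgeDescendants r e' := by
    rw [← hee', hT.isAcyclic.edgeDescendants_eq ha]
    exact iff_of_true (ha.imp fun p hp => ⟨hp.1, p.end_mem_support⟩)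
      (hT.notMem_descendants_of_adj hab ha)
  exact hT.eq_of_adj_of_mem_edgeDescendants_iff he' hab hcross

theorem isLaminar_edgeDescendants (hT : T.IsTree) (r : V) :
    IsLaminar (T.edgeDescendants r '' T.edgeSet) := by
  rintro _ ⟨e, he, rfl⟩ _ ⟨e', he', rfl⟩
  obtain ⟨a, b, -, ha, rfl⟩ := hT.exists_eq_of_mem_edgeSet r he
  obtain ⟨a', b', -, ha', rfl⟩ := hT.exists_eq_of_mem_edgeSet r he'
  rw [hT.isAcyclic.edgeDescendants_eq ha, hT.isAcyclic.edgeDescendants_eq ha']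
  exact hT.isAcyclic.isLaminar_range_descendants r _ ⟨a, rfl⟩ _ ⟨a', rfl⟩

end IsTree

theorem not_reachable_deleteEdges_of_boundary_subset {G : SimpleGraph V} {D : Set (Sym2 V)}
    {A : Set V} (ha : a ∈ A) (hb : b ∉ A) (hD : ∀ u v, G.Adj u v → u ∈ A → v ∉ A → s(u, v) ∈ D) :
    ¬(G.deleteEdges D).Reachable a b := by
  rintro ⟨w⟩
  obtain ⟨d, -, hd, hd'⟩ := w.exists_boundary_dart A ha hb
  have hadj := deleteEdges_adj.1 d.adj
  exact hadj.2 (hD _ _ hadj.1 hd hd')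

/-- The set `X ∆ Y` is nonempty, avoids `r`, and no edge of `G` other than `e` and `e'` leaves
it. -/
theorem not_connected_deleteEdges_pair {G T : SimpleGraph V} {X Y : Set V} {e e' : Sym2 V}
    (hX : ∀ u v, T.Adj u v → (u ∈ X ↔ v ∉ X) → s(u, v) = e)
    (hY : ∀ u v, T.Adj u v → (u ∈ Y ↔ v ∉ Y) → s(u, v) = e')
    (hGT : ∀ u v, G.Adj u v → ¬T.Adj u v → (u ∈ X ↔ u ∈ Y))
    (hXY : X ≠ Y) (hrX : r ∉ X) (hrY : r ∉ Y) : ¬(G.deleteEdges {e, e'}).Connected := by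
  obtain ⟨z, hz⟩ := Set.symmDiff_nonempty.2 hXY
  have hr : r ∉ symmDiff X Y := by rw [Set.mem_symmDiff]; tauto
  refine fun hG => not_reachable_deleteEdges_of_boundary_subset hz hr ?_ (hG z r)
  intro u v huv hu hv
  rw [Set.mem_symmDiff] at hu hv
  by_cases hT : T.Adj u v
  · have : (u ∈ X ↔ v ∉ X) ∨ (u ∈ Y ↔ v ∉ Y) := by tauto
    rcases this with h | h
    · simp [hX u v hT h]
    · simp [hY u v hT h]
  · have := hGT u v huv hT
    tauto

theorem IsTree.not_connected_deleteEdges (hT : T.IsTree) {G : SimpleGraph V} {e e' : Sym2 V}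
    (he : e ∈ T.edgeSet) (he' : e' ∈ T.edgeSet) (hne : e ≠ e')
    (hGT : ∀ u v, G.Adj u v → ¬T.Adj u v →
      (u ∈ T.edgeDescendants r e ↔ u ∈ T.edgeDescendants r e')) :
    ¬(G.deleteEdges {e, e'}).Connected :=
  not_connected_deleteEdges_pair (fun _ _ => hT.eq_of_adj_of_mem_edgeDescendants_iff he)
    (fun _ _ => hT.eq_of_adj_of_mem_edgeDescendants_iff he') hGT
    (fun h => hne (hT.injOn_edgeDescendants r he he' h))
    (hT.root_notMem_edgeDescendants he) (hT.root_notMem_edgeDescendants he')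

end SimpleGraph

theorem edge_partition_of_spanning_tree_general {V : Type*} [Fintype V]
    {G T : SimpleGraph V} (hT : T.IsTree)
    (k : ℕ) (hk : (G.edgeSet \ T.edgeSet).ncard = k) :
    ∃ P : Finset (Set (Sym2 V)),
      P.card ≤ 4 * k + 1 ∧
      (∀ S ∈ P, S ⊆ T.edgeSet) ∧
      (∀ e ∈ T.edgeSet, ∃! S : Set (Sym2 V), S ∈ P ∧ e ∈ S) ∧
      (∀ S ∈ P, ∀ e ∈ S, ∀ e' ∈ S, e ≠ e' → ¬ (G.deleteEdges {e, e'}).Connected) := by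
  classical
  obtain ⟨r⟩ := hT.connected.nonempty
  let M : Finset V := (G.edgeSet \ T.edgeSet).toFinset.biUnion Sym2.toFinset
  let trace : Sym2 V → Finset V := fun e => {u ∈ M | u ∈ T.edgeDescendants r e}
  obtain ⟨P, hcard, hsub, huniq, hfib⟩ := T.edgeFinset.exists_partition_fibers trace
  simp only [coe_edgeFinset, mem_edgeFinset] at hsub huniq
  refine ⟨P, ?_, hsub, huniq, fun S hS e he e' he' hne => ?_⟩
  · have hM : M.card ≤ 2 * k := by
      rw [← hk, Set.ncard_eq_toFinset_card']
      exact Finset.card_biUnion_sym2_toFinset_le _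
    have hlam : IsLaminar (T.edgeDescendants r '' T.edgeFinset) := by
      rw [coe_edgeFinset]
      exact hT.isLaminar_edgeDescendants r
    calc P.card ≤ (T.edgeFinset.image trace).card := hcard
      _ ≤ 2 * M.card + 1 := hlam.card_image_filter_mem_le M
      _ ≤ 4 * k + 1 := by omega
  · refine hT.not_connected_deleteEdges (r := r) (hsub S hS he) (hsub S hS he') hne
      fun u v huv hnT => ?_
    have hu : u ∈ M := Finset.mem_biUnion.2 ⟨s(u, v), by simpa using ⟨huv, hnT⟩, by simp⟩
    simpa [trace, hu] using congrArg (u ∈ ·) (hfib S hS e he e' he')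

/-- Let `T` be a spanning tree of a finite connected simple graph `G` and let
`F = G.edgeSet \ T.edgeSet` have cardinality `k`.  Then the edge set of `T` can be partitioned
into at most `4 * k + 1` sets such that every edge of `T` lies in exactly one set and, for any
two distinct edges `e ≠ e'` of the same set, deleting both `e` and `e'` from `G` disconnects
`G`; in particular at most one edge per set can be removed while keeping `G` connected. -/
theorem edge_partition_of_spanning_tree {V : Type*} [Fintype V]
    {G T : SimpleGraph V} (hG : G.Connected) (hT : T.IsTree) (hTG : T ≤ G)
    (k : ℕ) (hk : (G.edgeSet \ T.edgeSet).ncard = k) :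
    ∃ P : Finset (Set (Sym2 V)),
      P.card ≤ 4 * k + 1 ∧
      (∀ S ∈ P, S ⊆ T.edgeSet) ∧
      (∀ e ∈ T.edgeSet, ∃! S : Set (Sym2 V), S ∈ P ∧ e ∈ S) ∧
      (∀ S ∈ P, ∀ e ∈ S, ∀ e' ∈ S, e ≠ e' → ¬ (G.deleteEdges {e, e'}).Connected) :=
  edge_partition_of_spanning_tree_general hT k hk
end

section
/- Let G be a finite simple graph with an injective weight function w on its edges, and let P be a partition of the vertex set of G. For each part p of P that has at least one edge of G with exactly one endpoint in p, let e_p be the minimum-weight edge of G with exactly one endpoint in p. Then the set of chosen edges {e_p} contains no cycle, i.e., the spanning subgraph of G whose edge set is {e_p : p ∈ P} is acyclic. -/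
/-! The heaviest edge `e` of a cycle is the lightest edge leaving some part `p`.  Going around
the cycle from one endpoint of `e` back to the other without using `e` must leave `p` again,
through an edge that is at least as heavy as `e` (minimality) and at most as heavy (maximality);
distinct weights make the two edges equal, which is absurd. -/

open SimpleGraph

/-- `Outgoing G p e` says that `e` is an edge of `G` with exactly one endpoint in the
vertex set `p`. -/
def Outgoing {V : Type*} (G : SimpleGraph V) (p : Set V) (e : Sym2 V) : Prop :=
  e ∈ G.edgeSet ∧ ∃ a b : V, e = s(a, b) ∧ a ∈ p ∧ b ∉ p

section

variable {V : Type*}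

theorem Outgoing.mono {G G' : SimpleGraph V} (h : G ≤ G') {p : Set V} {e : Sym2 V}
    (he : Outgoing G p e) : Outgoing G' p e :=
  ⟨edgeSet_mono h he.1, he.2⟩

theorem SimpleGraph.Walk.IsCycle.exists_boundary_edge_ne {G : SimpleGraph V} {u a b : V}
    {c : G.Walk u u} (hc : c.IsCycle) (hab : s(a, b) ∈ c.edges) (S : Set V) (ha : a ∈ S)
    (hb : b ∉ S) : ∃ x y, s(x, y) ∈ c.edges ∧ s(x, y) ≠ s(a, b) ∧ x ∈ S ∧ y ∉ S := by
  -- `s(a, b)` is not a bridge of the graph formed by the edges of `c`.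
  set H := c.toSubgraph.spanningCoe
  have hH : ∀ e, e ∈ H.edgeSet ↔ e ∈ c.edges := by
    simp [H, Subgraph.edgeSet_spanningCoe, Walk.edgeSet_toSubgraph, Walk.edgeSet]
  have hbridge : ¬ H.IsBridge s(a, b) := fun h =>
    h.notMem_edges_of_isCycle (hc.transfer fun e => (hH e).2) (by rwa [Walk.edges_transfer])
  obtain ⟨q, hq⟩ : ∃ q : H.Walk a b, s(a, b) ∉ q.edges := by
    simpa [isBridge_iff_forall_walk_mem_edges] using hbridge
  obtain ⟨d, hd, hx, hy⟩ := q.exists_boundary_dart S ha hb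
  have hdq : d.edge ∈ q.edges := List.mem_map_of_mem hd
  exact ⟨d.fst, d.snd, (hH _).1 (q.edges_subset_edgeSet hdq), ne_of_mem_of_not_mem hdq hq,
    hx, hy⟩

theorem SimpleGraph.isAcyclic_of_forall_le_outgoing {α : Type*} [LinearOrder α]
    {H : SimpleGraph V} {w : Sym2 V → α} (hw : Set.InjOn w H.edgeSet)
    (h : ∀ e ∈ H.edgeSet, ∃ p, Outgoing H p e ∧ ∀ e', Outgoing H p e' → w e ≤ w e') :
    H.IsAcyclic := by
  classical
  intro v c hc
  obtain ⟨e, he, hmax⟩ := c.edges.toFinset.exists_max_image w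
    (List.toFinset_nonempty_iff _ |>.mpr (Walk.edges_eq_nil.not.mpr hc.not_nil))
  rw [List.mem_toFinset] at he
  obtain ⟨p, ⟨-, a, b, rfl, ha, hb⟩, hmin⟩ := h _ (c.edges_subset_edgeSet he)
  obtain ⟨x, y, hxy, hne, hx, hy⟩ := hc.exists_boundary_edge_ne he p ha hb
  have hxyH := c.edges_subset_edgeSet hxy
  exact hne <| hw hxyH (c.edges_subset_edgeSet he) <|
    (hmax _ (List.mem_toFinset.mpr hxy)).antisymm (hmin _ ⟨hxyH, x, y, rfl, hx, hy⟩)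

end

theorem minimum_outgoing_edges_acyclic_general {V : Type*}
    (G : SimpleGraph V) (w : Sym2 V → ℝ) (hw : Set.InjOn w G.edgeSet)
    (P : Set (Set V))
    (sel : Set V → Sym2 V)
    (hsel : ∀ p ∈ P, (∃ e, Outgoing G p e) →
      Outgoing G p (sel p) ∧ ∀ e, Outgoing G p e → w (sel p) ≤ w e) :
    (SimpleGraph.fromEdgeSet
      {e : Sym2 V | ∃ p ∈ P, (∃ e', Outgoing G p e') ∧ e = sel p}).IsAcyclic := by
  set H := SimpleGraph.fromEdgeSet {e : Sym2 V | ∃ p ∈ P, (∃ e', Outgoing G p e') ∧ e = sel p}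
  have hHG : H ≤ G := by
    rw [fromEdgeSet_le]
    rintro e ⟨⟨p, hp, hex, rfl⟩, -⟩
    exact (hsel p hp hex).1.1
  refine isAcyclic_of_forall_le_outgoing (hw.mono (edgeSet_mono hHG)) fun e he => ?_
  obtain ⟨⟨p, hp, hex, rfl⟩, -⟩ := (edgeSet_fromEdgeSet _).subset he
  obtain ⟨hout, hmin⟩ := hsel p hp hex
  exact ⟨p, ⟨he, hout.2⟩, fun e' he' => hmin e' (he'.mono hHG)⟩

/-- Let `G` be a finite simple graph whose edges carry distinct real weights
(`w` is injective on the edge set), and let `P` be a partition of the vertex set of `G`.  For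
each part `p ∈ P` having at least one outgoing edge, let `sel p` be the minimum-weight edge of
`G` with exactly one endpoint in `p`.  Then the spanning subgraph of `G` whose edges are the
chosen edges `sel p` is acyclic. -/
theorem minimum_outgoing_edges_acyclic {V : Type*} [Fintype V]
    (G : SimpleGraph V) (w : Sym2 V → ℝ) (hw : Set.InjOn w G.edgeSet)
    (P : Set (Set V)) (hP : Setoid.IsPartition P)
    (sel : Set V → Sym2 V)
    (hsel : ∀ p ∈ P, (∃ e, Outgoing G p e) →
      Outgoing G p (sel p) ∧ ∀ e, Outgoing G p e → w (sel p) ≤ w e) :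
    (SimpleGraph.fromEdgeSet
      {e : Sym2 V | ∃ p ∈ P, (∃ e', Outgoing G p e') ∧ e = sel p}).IsAcyclic :=
  minimum_outgoing_edges_acyclic_general G w hw P sel hsel
end
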